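/- Fix an integer $l \ge 2$. The system of equations in complex unknowns $h_1,\dots,h_l$ given by $h_l(h_l - 1) = 0$ and $h_i\left(h_i + 2h_{i+1} + \cdots + 2h_{l-1} + h_l + l - i - \tfrac{1}{2}\right) = 0$ for $1 \le i \le l-1$, has exactly $2^l$ solutions in $\mathbb{C}^l$. -/

import Mathlib

/-- The solution set of the system `h_l(h_l-1)=0`,
`h_i (h_i + 2h_{i+1} + ⋯ + 2h_{l-1} + h_l + l - i - 1/2) = 0` (`1 ≤ i ≤ l-1`),
with 0-indexed unknowns: `h i` is the paper's `h_{i+1}`. -/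
def solSet12 (l : ℕ) (hl : 2 ≤ l) : Set (Fin l → ℂ) :=
  {h : Fin l → ℂ |
    h ⟨l - 1, by omega⟩ * (h ⟨l - 1, by omega⟩ - 1) = 0 ∧
    ∀ i : Fin l, (i : ℕ) < l - 1 →
      h i * (h i + 2 * ∑ s ∈ Finset.Ioo i ⟨l - 1, by omega⟩, h s + h ⟨l - 1, by omega⟩ +
        (l : ℂ) - ((i : ℕ) : ℂ) - 3 / 2) = 0}

noncomputable def pF (ε : ℕ → Bool) : ℕ → ℂ × ℂ
  | 0 => (if ε 0 then 1 else 0, if ε 0 then 1 else 0)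
  | k+1 =>
    let g := (pF ε k).2
    let f : ℂ := if ε (k+1) then -(g + k + 1/2) else 0
    (f, 2*f + g)

lemma pF_gInt (ε : ℕ → Bool) : ∀ k, ∃ n : ℤ, (pF ε k).2 = n := by
  intro k
  induction k with
  | zero =>
    by_cases h : ε 0
    · exact ⟨1, by simp [pF, h]⟩
    · exact ⟨0, by simp [pF, h]⟩
  | succ k ih =>
    obtain ⟨n, hn⟩ := ih
    by_cases h : ε (k+1)
    · refine ⟨-n - 2*k - 1, ?_⟩
      simp only [pF, h, if_true, hn]
      push_cast
      ring
    · exact ⟨n, by simp [pF, h, hn]⟩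

lemma half_ne (n : ℤ) (k : ℕ) : (n : ℂ) + k + 1/2 ≠ 0 := by
  intro h
  have h2 : ((2*n + 2*(k:ℤ) + 1 : ℤ) : ℂ) = 0 := by push_cast; linear_combination 2 * h
  have h3 : (2*n + 2*(k:ℤ) + 1) = 0 := by exact_mod_cast h2
  omega

lemma pF_f_ne (ε : ℕ → Bool) (k : ℕ) : (pF ε k).1 ≠ 0 ↔ ε k = true := by
  cases k with
  | zero =>
    by_cases h : ε 0 <;> simp [pF, h]
  | succ k =>
    obtain ⟨n, hn⟩ := pF_gInt ε k
    by_cases h : ε (k+1) = true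
    · have he : (pF ε (k+1)).1 = -((n:ℂ) + k + 1/2) := by simp [pF, h, hn]
      rw [he, ne_eq, neg_eq_zero]
      exact iff_of_true (half_ne n k) h
    · simp [pF, h]

lemma pF_g_eq (ε : ℕ → Bool) (k : ℕ) :
    (pF ε k).2 = (pF ε 0).1 + 2 * ∑ j ∈ Finset.Icc 1 k, (pF ε j).1 := by
  induction k with
  | zero => simp [pF]
  | succ k ih =>
    rw [Finset.sum_Icc_succ_top (by omega)]
    show 2 * (pF ε (k+1)).1 + (pF ε k).2 = _
    rw [ih]; ring

lemma sum_reindex (l : ℕ) (hl : 2 ≤ l) (i : Fin l) (hi : (i : ℕ) < l - 1) (F : ℕ → ℂ) :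
    ∑ s ∈ Finset.Ioo i (⟨l - 1, by omega⟩ : Fin l), F (l - 1 - (s : ℕ))
      = ∑ j ∈ Finset.Icc 1 (l - 2 - (i : ℕ)), F j := by
  refine Finset.sum_nbij' (fun s => l - 1 - (s : ℕ))
    (fun j => ⟨l - 1 - j, by omega⟩) ?_ ?_ ?_ ?_ ?_
  · intro s hs
    simp only [Finset.mem_Ioo, Fin.lt_def] at hs
    simp only [Finset.mem_Icc]
    omega
  · intro j hj
    simp only [Finset.mem_Icc] at hj
    simp only [Finset.mem_Ioo, Fin.lt_def]
    omega
  · intro s hs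
    simp only [Finset.mem_Ioo, Fin.lt_def] at hs
    ext
    simp
    omega
  · intro j hj
    simp only [Finset.mem_Icc] at hj
    simp
    omega
  · intro s hs; rfl

noncomputable def solF (l : ℕ) (ε : Fin l → Bool) : Fin l → ℂ :=
  fun i => (pF (fun k => if h : k < l then ε ⟨k, h⟩ else false) (l - 1 - (i : ℕ))).1

lemma cast_sub2 (l k : ℕ) (hk : k + 2 ≤ l) : ((l - 2 - k : ℕ) : ℂ) = (l : ℂ) - 2 - (k : ℂ) := by
  have h1 : l - 2 - k = l - (2 + k) := by omega
  rw [h1, Nat.cast_sub (by omega)]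
  push_cast
  ring

lemma solF_mem (l : ℕ) (hl : 2 ≤ l) (ε : Fin l → Bool) : solF l ε ∈ solSet12 l hl := by
  set ε' : ℕ → Bool := fun k => if h : k < l then ε ⟨k, h⟩ else false with hε'
  have hlast : solF l ε ⟨l - 1, by omega⟩ = (pF ε' 0).1 := by
    simp [solF, Nat.sub_self, hε']
  constructor
  · rw [hlast]
    by_cases h : ε' 0 <;> simp [pF, h]
  · intro i hi
    have key : 2 * ∑ s ∈ Finset.Ioo i (⟨l - 1, by omega⟩ : Fin l), solF l ε s +
        solF l ε ⟨l - 1, by omega⟩ = (pF ε' (l - 2 - (i : ℕ))).2 := by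
      rw [pF_g_eq, hlast]
      have hs : ∑ s ∈ Finset.Ioo i (⟨l - 1, by omega⟩ : Fin l), solF l ε s =
          ∑ j ∈ Finset.Icc 1 (l - 2 - (i : ℕ)), (pF ε' j).1 := by
        rw [← sum_reindex l hl i hi (fun m => (pF ε' m).1)]
        exact Finset.sum_congr rfl fun s _ => rfl
      rw [hs]; ring
    have hC : (l : ℂ) - ((i : ℕ) : ℂ) - 3 / 2 = ((l - 2 - (i : ℕ) : ℕ) : ℂ) + 1 / 2 := by
      rw [cast_sub2 l i (by omega)]; ring
    have hk : l - 1 - (i : ℕ) = (l - 2 - (i : ℕ)) + 1 := by omega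
    by_cases h : ε' (l - 2 - (i : ℕ) + 1) = true
    · have hf : solF l ε i = -((pF ε' (l - 2 - (i : ℕ))).2 +
          ((l - 2 - (i : ℕ) : ℕ) : ℂ) + 1 / 2) := by
        show (pF ε' (l - 1 - (i : ℕ))).1 = _
        rw [hk]
        simp only [pF, h, if_true]
      apply mul_eq_zero_of_right
      linear_combination hf + key + hC
    · have hf : solF l ε i = 0 := by
        show (pF ε' (l - 1 - (i : ℕ))).1 = 0
        rw [hk]
        simp [pF, h]
      rw [hf, zero_mul]

lemma solF_surj (l : ℕ) (hl : 2 ≤ l) (h : Fin l → ℂ) (hm : h ∈ solSet12 l hl) :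
    ∃ ε : Fin l → Bool, solF l ε = h := by
  obtain ⟨h1, h2⟩ := hm
  refine ⟨fun j => decide (h ⟨l - 1 - (j : ℕ), by omega⟩ ≠ 0), ?_⟩
  set ε : Fin l → Bool := fun j => decide (h ⟨l - 1 - (j : ℕ), by omega⟩ ≠ 0) with hεdef
  set ε' : ℕ → Bool := fun k => if hk : k < l then ε ⟨k, hk⟩ else false with hε'
  have hεk : ∀ k, k ≤ l - 1 → (ε' k = true ↔ h ⟨l - 1 - k, by omega⟩ ≠ 0) := by
    intro k hkl
    simp only [hε', hεdef]
    rw [dif_pos (by omega : k < l)]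
    simp
  have main : ∀ k, k ≤ l - 1 →
      (pF ε' k).1 = h ⟨l - 1 - k, by omega⟩ ∧
      (pF ε' k).2 = 2 * ∑ s ∈ Finset.Ico (⟨l - 1 - k, by omega⟩ : Fin l)
        (⟨l - 1, by omega⟩ : Fin l), h s + h ⟨l - 1, by omega⟩ := by
    intro k
    induction k with
    | zero =>
      intro _
      have hf0 : (pF ε' 0).1 = h ⟨l - 1 - 0, by omega⟩ := by
        by_cases h0 : h (⟨l - 1 - 0, by omega⟩ : Fin l) = 0
        · have he : ε' 0 = false := by
            rw [Bool.eq_false_iff]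
            intro hc
            exact ((hεk 0 (by omega)).1 hc) h0
          rw [h0]; simp [pF, he]
        · have he : ε' 0 = true := (hεk 0 (by omega)).2 h0
          have hv : h (⟨l - 1 - 0, by omega⟩ : Fin l) = 1 := by
            rcases mul_eq_zero.1 h1 with hc | hc
            · exact absurd hc h0
            · exact sub_eq_zero.1 hc
          rw [hv]; simp [pF, he]
      refine ⟨hf0, ?_⟩
      have hIco : Finset.Ico (⟨l - 1 - 0, by omega⟩ : Fin l) (⟨l - 1, by omega⟩ : Fin l)
          = ∅ := by
        ext s
        simp only [Finset.mem_Ico, Fin.le_def, Fin.lt_def, Finset.notMem_empty, iff_false,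
          not_and, not_lt]
        omega
      rw [hIco, Finset.sum_empty]
      have hgf : (pF ε' 0).2 = (pF ε' 0).1 := rfl
      rw [hgf, hf0]
      show h ⟨l - 1, by omega⟩ = 2 * 0 + h ⟨l - 1, by omega⟩
      ring
    | succ k ih =>
      intro hk1
      obtain ⟨ihf, ihg⟩ := ih (by omega)
      have hIoo : Finset.Ioo (⟨l - 2 - k, by omega⟩ : Fin l) (⟨l - 1, by omega⟩ : Fin l)
          = Finset.Ico (⟨l - 1 - k, by omega⟩ : Fin l) (⟨l - 1, by omega⟩ : Fin l) := by
        ext s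
        simp only [Finset.mem_Ioo, Finset.mem_Ico, Fin.le_def, Fin.lt_def]
        omega
      have heq := h2 ⟨l - 2 - k, by omega⟩ (by simpa using (by omega : l - 2 - k < l - 1))
      rw [hIoo] at heq
      have hcast : (l : ℂ) - ((l - 2 - k : ℕ) : ℂ) - 3/2 = (k : ℂ) + 1/2 := by
        rw [cast_sub2 l k (by omega)]; ring
      have heq' : h (⟨l - 2 - k, by omega⟩ : Fin l) *
          (h (⟨l - 2 - k, by omega⟩ : Fin l) + (pF ε' k).2 + (k : ℂ) + 1/2) = 0 := by
        rw [ihg]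
        linear_combination heq - h (⟨l - 2 - k, by omega⟩ : Fin l) * hcast
      have hidx : (⟨l - 1 - (k+1), by omega⟩ : Fin l) = (⟨l - 2 - k, by omega⟩ : Fin l) := by
        simp only [Fin.mk.injEq]
        omega
      have hfk1 : (pF ε' (k+1)).1 = h ⟨l - 1 - (k+1), by omega⟩ := by
        rw [hidx]
        by_cases h0 : h (⟨l - 2 - k, by omega⟩ : Fin l) = 0
        · have he : ε' (k+1) = false := by
            rw [Bool.eq_false_iff]
            intro hc
            exact ((hεk (k+1) hk1).1 hc) (by rw [hidx]; exact h0)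
          rw [h0]; simp [pF, he]
        · have he : ε' (k+1) = true := (hεk (k+1) hk1).2 (by rw [hidx]; exact h0)
          rcases mul_eq_zero.1 heq' with hc | hc
          · exact absurd hc h0
          · simp only [pF, he, if_true]
            linear_combination -hc
      refine ⟨hfk1, ?_⟩
      have hg : (pF ε' (k+1)).2 = 2 * (pF ε' (k+1)).1 + (pF ε' k).2 := rfl
      rw [hg, hfk1, ihg]
      have hins : Finset.Ico (⟨l - 1 - (k+1), by omega⟩ : Fin l) (⟨l - 1, by omega⟩ : Fin l)
          = insert (⟨l - 1 - (k+1), by omega⟩ : Fin l)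
              (Finset.Ico (⟨l - 1 - k, by omega⟩ : Fin l) (⟨l - 1, by omega⟩ : Fin l)) := by
        ext s
        simp only [Finset.mem_Ico, Finset.mem_insert, Fin.le_def, Fin.lt_def, Fin.mk.injEq,
          Fin.ext_iff]
        omega
      rw [hins, Finset.sum_insert (by
        simp only [Finset.mem_Ico, Fin.le_def, Fin.lt_def]
        omega)]
      ring
  funext i
  have hi := (main (l - 1 - (i : ℕ)) (by omega)).1
  have hidx : (⟨l - 1 - (l - 1 - (i : ℕ)), by omega⟩ : Fin l) = i := by
    apply Fin.ext
    simp only [Fin.val_mk]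
    omega
  rw [hidx] at hi
  exact hi

lemma solF_inj (l : ℕ) (hl : 2 ≤ l) : Function.Injective (solF l) := by
  intro ε₁ ε₂ hE
  funext j
  have hthis : (pF (fun k => if hk : k < l then ε₁ ⟨k, hk⟩ else false)
        (l - 1 - (l - 1 - (j : ℕ)))).1
      = (pF (fun k => if hk : k < l then ε₂ ⟨k, hk⟩ else false)
        (l - 1 - (l - 1 - (j : ℕ)))).1 :=
    congrFun hE ⟨l - 1 - (j : ℕ), by omega⟩
  have hv : l - 1 - (l - 1 - (j : ℕ)) = (j : ℕ) := by omega
  rw [hv] at hthis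
  have hn1 := pF_f_ne (fun k => if hk : k < l then ε₁ ⟨k, hk⟩ else false) (j : ℕ)
  have hn2 := pF_f_ne (fun k => if hk : k < l then ε₂ ⟨k, hk⟩ else false) (j : ℕ)
  rw [hthis] at hn1
  have e1 : (if hk : (j : ℕ) < l then ε₁ ⟨(j : ℕ), hk⟩ else false) = ε₁ j := by
    rw [dif_pos j.isLt]
  have e2 : (if hk : (j : ℕ) < l then ε₂ ⟨(j : ℕ), hk⟩ else false) = ε₂ j := by
    rw [dif_pos j.isLt]
  rw [e1] at hn1
  rw [e2] at hn2
  have : ε₁ j = true ↔ ε₂ j = true := by rw [← hn1, ← hn2]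
  cases hb1 : ε₁ j <;> cases hb2 : ε₂ j <;> simp_all

/-- The system has exactly `2^l` solutions in `ℂ^l`. -/
theorem stmt_12 (l : ℕ) (hl : 2 ≤ l) :
    (solSet12 l hl).Finite ∧ (solSet12 l hl).ncard = 2 ^ l := by
  have hrange : solSet12 l hl = Set.range (solF l) := by
    ext h
    constructor
    · intro hm
      obtain ⟨ε, hε⟩ := solF_surj l hl h hm
      exact ⟨ε, hε⟩
    · rintro ⟨ε, rfl⟩
      exact solF_mem l hl ε
  rw [hrange]
  refine ⟨Set.finite_range _, ?_⟩
  rw [← Set.image_univ, Set.ncard_image_of_injective _ (solF_inj l hl), Set.ncard_univ,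
    Nat.card_eq_fintype_card]
  simp
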